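/- Work in ℝ², fix j ∈ {1,2} and nonzero reals c_1, c_2, and for parameters (ρ_1, ρ_2, a_1, a_2, d_1, d_2) with ρ_1 c_1 ≠ 0 and ρ_2 c_2 ≠ 0 let A = (A_1, A_2) with A_k = [[a_k, ρ_k c_k],[c_k, d_k]]. Then for every Schwartz function f : ℝ² → ℂ and every x ∈ ℝ², as (ρ_1, ρ_2, a_1, a_2, d_1, d_2) → (−1, −1, 0, 0, 0, 0), the values R_j^A f(x) converge to R_j f(x), the classical j-th Riesz transform of f at x. -/

import Mathlib

/-!
With `w = a/(2b)`, `R_j^A f(x) = c̃₂ · chirp(-d/(2b))(x) · p.v.(K_j ∗ g_w)(x)` where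
`g_w = f · chirp w`, and both `w` and `d/(2b)` tend to `0` at the limit parameters, since
`b → -c ≠ 0`. So everything reduces to continuity of `w ↦ p.v.(K_j ∗ g_w)(x)` at `w = 0`.

The Riesz kernel `K_j` is odd, so its integral over each annulus `ε ≤ |z| < 1` vanishes.
Subtracting `g(x)` on the unit ball therefore turns the truncated integrals into integrals of
`K_j(z) (g(x - z) - 1_{|z|<1} g(x))` over `|z| ≥ ε`. For `g` integrable and Lipschitz at `x`
this integrand is dominated by `|z|^{1-n}` near `0` and by `|g(x - z)|` away from it, hence is
absolutely integrable, and the principal value is its Lebesgue integral. For small `w` the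
functions `g_w` have `|g_w| = |f|` and a common Lipschitz constant at `x`, so dominated
convergence lets `w → 0` under that integral.
-/

open MeasureTheory Filter Topology
open scoped Real ENNReal RealInnerProductSpace

noncomputable section

/-- The constant `c̃ₙ = Γ((n+1)/2) / π^((n+1)/2)`. -/
def rieszConst (n : ℕ) : ℝ :=
  Real.Gamma (((n : ℝ) + 1) / 2) / Real.pi ^ (((n : ℝ) + 1) / 2)

/-- The chirp function `exp(i Σₖ wₖ yₖ²)`. -/
def chirp {n : ℕ} (w : Fin n → ℝ) (y : EuclideanSpace ℝ (Fin n)) : ℂ :=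
  Complex.exp (Complex.I * ((∑ k, w k * y k ^ 2 : ℝ) : ℂ))

/-- The truncated Riesz-type singular integral
`∫_{‖x-y‖ ≥ ε} (xⱼ - yⱼ) ‖x - y‖^{-(n+1)} g y dy`. -/
def truncRiesz {n : ℕ} (j : Fin n) (g : EuclideanSpace ℝ (Fin n) → ℂ)
    (x : EuclideanSpace ℝ (Fin n)) (ε : ℝ) : ℂ :=
  ∫ y in {y : EuclideanSpace ℝ (Fin n) | ε ≤ ‖x - y‖},
    ((x j - y j : ℝ) : ℂ) / ((‖x - y‖ : ℝ) : ℂ) ^ (n + 1) * g y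

/-- The principal value `lim_{ε → 0⁺}` of the truncated Riesz-type singular integral. -/
def pvRiesz {n : ℕ} (j : Fin n) (g : EuclideanSpace ℝ (Fin n) → ℂ)
    (x : EuclideanSpace ℝ (Fin n)) : ℂ :=
  limUnder (𝓝[>] (0 : ℝ)) (truncRiesz j g x)

/-- The `j`-th linear canonical Riesz transform with parameters `a b d`
(entries of the matrices `Aₖ = [[aₖ, bₖ], [cₖ, dₖ]]`). -/
def lcRiesz {n : ℕ} (a b d : Fin n → ℝ) (j : Fin n)
    (f : EuclideanSpace ℝ (Fin n) → ℂ) (x : EuclideanSpace ℝ (Fin n)) : ℂ :=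
  (rieszConst n : ℂ) * chirp (fun k => -(d k) / (2 * b k)) x *
    pvRiesz j (fun y => f y * chirp (fun k => a k / (2 * b k)) y) x

/-- The classical `j`-th Riesz transform (principal value). -/
def rieszTrans {n : ℕ} (j : Fin n) (f : EuclideanSpace ℝ (Fin n) → ℂ)
    (x : EuclideanSpace ℝ (Fin n)) : ℂ :=
  (rieszConst n : ℂ) * pvRiesz j f x

/-- The kernel of the linear canonical transform with parameters `a b d`. -/
def lctKernel {n : ℕ} (a b d : Fin n → ℝ)
    (x u : EuclideanSpace ℝ (Fin n)) : ℂ :=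
  ∏ k, ((2 * (Real.pi : ℂ) * Complex.I * (b k : ℂ))⁻¹ ^ ((1 : ℂ) / 2) *
    (Complex.exp (Complex.I * ((a k * x k ^ 2 / (2 * b k) : ℝ) : ℂ)) *
      (Complex.exp (-(Complex.I * ((x k * u k / b k : ℝ) : ℂ))) *
        Complex.exp (Complex.I * ((d k * u k ^ 2 / (2 * b k) : ℝ) : ℂ)))))

/-- The linear canonical transform with parameters `a b d`. -/
def lct {n : ℕ} (a b d : Fin n → ℝ) (f : EuclideanSpace ℝ (Fin n) → ℂ)
    (u : EuclideanSpace ℝ (Fin n)) : ℂ :=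
  ∫ x, f x * lctKernel a b d x u

end

/-- The parameter space `(ρ₁, ρ₂, a₁, a₂, d₁, d₂)` for the family of matrices
`Aₖ = [[aₖ, ρₖ cₖ],[cₖ, dₖ]]`: a triple `(ρ, a, d)`. -/
abbrev LCParam : Type := (Fin 2 → ℝ) × (Fin 2 → ℝ) × (Fin 2 → ℝ)

/-- The limiting parameter point `(ρ, a, d) = (-1, -1, 0, 0, 0, 0)`. -/
def lcParamLimit : LCParam := (fun _ => -1, fun _ => 0, fun _ => 0)

/-- The set of admissible parameters, those with `bₖ = ρₖ cₖ ≠ 0` for `k = 1, 2`. -/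
def lcParamValid (c : Fin 2 → ℝ) : Set LCParam := {q | ∀ k, q.1 k * c k ≠ 0}

open Metric

section OddIntegral

variable {E F : Type*} [AddGroup E] [MeasurableSpace E] [MeasurableNeg E] [NormedAddCommGroup F]
  [NormedSpace ℝ F] {μ : Measure E} [μ.IsNegInvariant]

lemma setIntegral_eq_zero_of_odd {f : E → F} (hf : ∀ z, f (-z) = -f z) {s : Set E}
    (hs : MeasurableSet s) (hs_neg : ∀ z, -z ∈ s ↔ z ∈ s) : ∫ z in s, f z ∂μ = 0 := by
  have hodd : ∀ z, s.indicator f (-z) = -s.indicator f z := fun z => by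
    by_cases hz : z ∈ s
    · rw [Set.indicator_of_mem ((hs_neg z).2 hz), Set.indicator_of_mem hz, hf]
    · rw [Set.indicator_of_notMem (mt (hs_neg z).1 hz), Set.indicator_of_notMem hz, neg_zero]
  have h := integral_neg_eq_self (s.indicator f) μ
  simp_rw [hodd, integral_neg] at h
  rw [← integral_indicator hs]
  set I := ∫ z, s.indicator f z ∂μ
  have h2 : (2 : ℝ) • I = 0 := by rw [two_smul]; nth_rw 1 [← h]; exact neg_add_cancel I
  exact (smul_eq_zero.1 h2).resolve_left two_ne_zero

end OddIntegral

lemma tendsto_setIntegral_le_norm_nhdsGT_zero {E F : Type*} [NormedAddCommGroup E]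
    [MeasurableSpace E] [OpensMeasurableSpace E] [NormedAddCommGroup F] [NormedSpace ℝ F]
    {μ : Measure E} [NullSingletonClass μ] {f : E → F} (hf : Integrable f μ) :
    Tendsto (fun ε : ℝ => ∫ z in {z | ε ≤ ‖z‖}, f z ∂μ) (𝓝[>] 0) (𝓝 (∫ z, f z ∂μ)) := by
  have hmeas : ∀ ε : ℝ, MeasurableSet {z : E | ε ≤ ‖z‖} := fun ε =>
    measurableSet_le measurable_const measurable_norm
  simp_rw [← integral_indicator (hmeas _)]
  refine tendsto_integral_filter_of_dominated_convergence (fun z => ‖f z‖)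
    (Eventually.of_forall fun ε => hf.aestronglyMeasurable.indicator (hmeas ε))
    (Eventually.of_forall fun ε => Eventually.of_forall fun z => norm_indicator_le_norm_self _ _)
    hf.norm ?_
  filter_upwards [μ.ae_ne 0] with z hz
  refine tendsto_const_nhds.congr' ?_
  filter_upwards [Ioo_mem_nhdsGT (norm_pos_iff.2 hz)] with ε hε
  exact (Set.indicator_of_mem (show z ∈ {z : E | ε ≤ ‖z‖} from hε.2.le) f).symm

section RieszKernel

variable {n : ℕ}

noncomputable def rieszKernel (j : Fin n) (z : EuclideanSpace ℝ (Fin n)) : ℂ :=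
  ((z j : ℝ) : ℂ) / ((‖z‖ : ℝ) : ℂ) ^ (n + 1)

lemma measurable_rieszKernel (j : Fin n) : Measurable (rieszKernel j) := by
  unfold rieszKernel; fun_prop

lemma rieszKernel_neg (j : Fin n) (z : EuclideanSpace ℝ (Fin n)) :
    rieszKernel j (-z) = -rieszKernel j z := by
  simp [rieszKernel, neg_div]

lemma norm_rieszKernel_le (j : Fin n) (z : EuclideanSpace ℝ (Fin n)) :
    ‖rieszKernel j z‖ ≤ (‖z‖ ^ n)⁻¹ := by
  rw [rieszKernel, norm_div, norm_pow, Complex.norm_real, Complex.norm_real, norm_norm, pow_succ',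
    ← div_div, div_eq_mul_inv _ (‖z‖ ^ n)]
  exact mul_le_of_le_one_left (by positivity)
    (div_le_one_of_le₀ (PiLp.norm_apply_le z j) (norm_nonneg z))

end RieszKernel

section PrincipalValue

variable {n : ℕ}

noncomputable def pvIntegrand (j : Fin n) (g : EuclideanSpace ℝ (Fin n) → ℂ)
    (x z : EuclideanSpace ℝ (Fin n)) : ℂ :=
  rieszKernel j z * (g (x - z) - (ball 0 1).indicator (fun _ => g x) z)

noncomputable def pvMajorant (L : ℝ) (G : EuclideanSpace ℝ (Fin n) → ℝ)
    (x z : EuclideanSpace ℝ (Fin n)) : ℝ :=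
  (ball 0 1).indicator (fun z => L * ‖z‖ ^ (-((n : ℝ) - 1))) z +
    (ball 0 1)ᶜ.indicator (fun z => G (x - z)) z

variable (j : Fin n) {g : EuclideanSpace ℝ (Fin n) → ℂ} {x : EuclideanSpace ℝ (Fin n)} {L : ℝ}

lemma norm_pvIntegrand_le {G : EuclideanSpace ℝ (Fin n) → ℝ} (hG : ∀ y, ‖g y‖ ≤ G y)
    (hL : ∀ z ∈ ball 0 1, ‖g (x - z) - g x‖ ≤ L * ‖z‖) {z : EuclideanSpace ℝ (Fin n)}
    (hz : z ≠ 0) : ‖pvIntegrand j g x z‖ ≤ pvMajorant L G x z := by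
  have hz' : 0 < ‖z‖ := norm_pos_iff.2 hz
  rw [pvIntegrand, pvMajorant, norm_mul]
  by_cases hball : z ∈ ball 0 1
  · have hpow : (‖z‖ ^ n)⁻¹ * (L * ‖z‖) = L * ‖z‖ ^ (-((n : ℝ) - 1)) := by
      rw [neg_sub, Real.rpow_sub hz', Real.rpow_one, Real.rpow_natCast]; ring
    simp only [Set.indicator_of_mem hball, Set.indicator_of_notMem (Set.notMem_compl_iff.2 hball),
      add_zero, ← hpow]
    exact mul_le_mul (norm_rieszKernel_le j z) (hL z hball) (norm_nonneg _) (by positivity)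
  · have hone : 1 ≤ ‖z‖ := by simpa using hball
    simp only [Set.indicator_of_notMem hball, Set.indicator_of_mem (Set.mem_compl hball),
      sub_zero, zero_add]
    calc ‖rieszKernel j z‖ * ‖g (x - z)‖ ≤ 1 * G (x - z) := by
          refine mul_le_mul ((norm_rieszKernel_le j z).trans ?_) (hG _) (norm_nonneg _) zero_le_one
          exact inv_le_one_of_one_le₀ (one_le_pow₀ hone)
      _ = G (x - z) := one_mul _

lemma integrable_pvMajorant [NeZero n] {G : EuclideanSpace ℝ (Fin n) → ℝ} (hG : Integrable G) :
    Integrable (pvMajorant L G x) := by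
  refine Integrable.add (IntegrableOn.integrable_indicator ?_ measurableSet_ball)
    ((hG.comp_sub_left x).integrableOn.integrable_indicator measurableSet_ball.compl)
  refine integrableOn_ball_of_norm_le_rpow (C := |L|) (α := (n : ℝ) - 1) ?_ ?_ ?_ ?_
  · rw [finrank_euclideanSpace_fin]; exact Nat.one_le_iff_ne_zero.2 (NeZero.ne n)
  · rw [finrank_euclideanSpace_fin]; linarith
  · refine Eventually.of_forall fun z => ?_
    rw [norm_mul, Real.norm_of_nonneg (Real.rpow_nonneg (norm_nonneg z) _), Real.norm_eq_abs]
  · exact ((measurable_norm.pow_const _).const_mul L).aestronglyMeasurable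

lemma aestronglyMeasurable_pvIntegrand (hg : Integrable g) :
    AEStronglyMeasurable (pvIntegrand j g x) :=
  (measurable_rieszKernel j).aestronglyMeasurable.mul
    ((hg.comp_sub_left x).aestronglyMeasurable.sub
      (aestronglyMeasurable_const.indicator measurableSet_ball))

lemma integrable_pvIntegrand (hg : Integrable g)
    (hL : ∀ z ∈ ball 0 1, ‖g (x - z) - g x‖ ≤ L * ‖z‖) : Integrable (pvIntegrand j g x) := by
  have : NeZero n := NeZero.of_pos j.pos
  refine (integrable_pvMajorant (L := L) (x := x) hg.norm).mono'
    (aestronglyMeasurable_pvIntegrand j hg) ?_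
  filter_upwards [volume.ae_ne 0] with z hz
  exact norm_pvIntegrand_le j (fun y => le_rfl) hL hz

lemma truncRiesz_eq_setIntegral_pvIntegrand (hg : Integrable g)
    (hL : ∀ z ∈ ball 0 1, ‖g (x - z) - g x‖ ≤ L * ‖z‖) {ε : ℝ} (hε : 0 < ε) :
    truncRiesz j g x ε = ∫ z in {z | ε ≤ ‖z‖}, pvIntegrand j g x z := by
  set S := {z : EuclideanSpace ℝ (Fin n) | ε ≤ ‖z‖}
  have hS : MeasurableSet S := measurableSet_le measurable_const measurable_norm
  have hcov : truncRiesz j g x ε = ∫ z in S, rieszKernel j z * g (x - z) := by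
    rw [← (volume.measurePreserving_sub_left x).setIntegral_preimage_emb
      (MeasurableEquiv.subLeft x).measurableEmbedding]
    simp only [sub_sub_cancel]
    rfl
  have hsplit : ∀ z, rieszKernel j z * g (x - z) =
      pvIntegrand j g x z + (ball 0 1).indicator (fun z => rieszKernel j z * g x) z := by
    intro z
    by_cases hz : z ∈ ball 0 1 <;> simp [pvIntegrand, hz, mul_sub]
  have hann : IntegrableOn (fun z => rieszKernel j z * g x) (S ∩ ball 0 1) := by
    refine Measure.integrableOn_of_bounded (M := (ε ^ n)⁻¹ * ‖g x‖)
      (measure_inter_lt_top_of_right_ne_top measure_ball_lt_top.ne).ne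
      ((measurable_rieszKernel j).mul_const _).aestronglyMeasurable ?_
    rw [ae_restrict_iff' (hS.inter measurableSet_ball)]
    refine Eventually.of_forall fun z hz => ?_
    rw [norm_mul]
    gcongr
    exact (norm_rieszKernel_le j z).trans (by gcongr; exact hz.1)
  rw [hcov, integral_congr_ae (Eventually.of_forall hsplit),
    integral_add (integrable_pvIntegrand j hg hL).integrableOn
      ((integrableOn_indicator_iff measurableSet_ball).2 (Set.inter_comm _ _ ▸ hann)),
    setIntegral_indicator measurableSet_ball, integral_mul_const,
    setIntegral_eq_zero_of_odd (rieszKernel_neg j) (hS.inter measurableSet_ball)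
      (fun z => by simp [S]), zero_mul, add_zero]

lemma pvRiesz_eq_integral_pvIntegrand (hg : Integrable g)
    (hL : ∀ z ∈ ball 0 1, ‖g (x - z) - g x‖ ≤ L * ‖z‖) :
    pvRiesz j g x = ∫ z, pvIntegrand j g x z := by
  have : NeZero n := NeZero.of_pos j.pos
  have h : Tendsto (truncRiesz j g x) (𝓝[>] 0) (𝓝 (∫ z, pvIntegrand j g x z)) :=
    (tendsto_setIntegral_le_norm_nhdsGT_zero (integrable_pvIntegrand j hg hL)).congr'
      (eventually_mem_nhdsWithin.mono fun _ hε =>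
        (truncRiesz_eq_setIntegral_pvIntegrand j hg hL hε).symm)
  exact h.limUnder_eq

lemma tendsto_integral_pvIntegrand {ι : Type*} {l : Filter ι} [l.IsCountablyGenerated]
    {g : ι → EuclideanSpace ℝ (Fin n) → ℂ} {g₀ : EuclideanSpace ℝ (Fin n) → ℂ}
    {G : EuclideanSpace ℝ (Fin n) → ℝ} (hG : Integrable G)
    (hg : ∀ᶠ i in l, Integrable (g i)) (hgG : ∀ᶠ i in l, ∀ y, ‖g i y‖ ≤ G y)
    (hgL : ∀ᶠ i in l, ∀ z ∈ ball 0 1, ‖g i (x - z) - g i x‖ ≤ L * ‖z‖)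
    (hlim : ∀ y, Tendsto (fun i => g i y) l (𝓝 (g₀ y))) :
    Tendsto (fun i => ∫ z, pvIntegrand j (g i) x z) l (𝓝 (∫ z, pvIntegrand j g₀ x z)) := by
  have : NeZero n := NeZero.of_pos j.pos
  refine tendsto_integral_filter_of_dominated_convergence (pvMajorant L G x)
    (hg.mono fun i hi => aestronglyMeasurable_pvIntegrand j hi) ?_
    (integrable_pvMajorant hG) (Eventually.of_forall fun z => ?_)
  · filter_upwards [hgG, hgL] with i hiG hiL
    filter_upwards [volume.ae_ne 0] with z hz
    exact norm_pvIntegrand_le j hiG hiL hz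
  · refine ((hlim _).sub ?_).const_mul _
    by_cases hz : z ∈ ball 0 1
    · simpa [hz] using hlim x
    · simpa [hz] using tendsto_const_nhds

end PrincipalValue

lemma SchwartzMap.exists_lipschitzWith {E F : Type*} [NormedAddCommGroup E] [NormedSpace ℝ E]
    [NormedAddCommGroup F] [NormedSpace ℝ F] (f : SchwartzMap E F) : ∃ C, LipschitzWith C f :=
  ⟨(SchwartzMap.seminorm ℝ 0 1 f).toNNReal,
    lipschitzWith_of_nnnorm_fderiv_le f.differentiable fun y => by
      rw [← NNReal.coe_le_coe, coe_nnnorm, Real.coe_toNNReal _ (apply_nonneg _ _),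
        ← norm_iteratedFDeriv_one]
      exact f.norm_iteratedFDeriv_le_seminorm ℝ 1 y⟩

section Chirp

variable {n : ℕ}

lemma norm_chirp (w : Fin n → ℝ) (y : EuclideanSpace ℝ (Fin n)) : ‖chirp w y‖ = 1 :=
  Complex.norm_exp_I_mul_ofReal _

lemma chirp_zero (y : EuclideanSpace ℝ (Fin n)) : chirp 0 y = 1 := by
  simp [chirp]

lemma continuous_chirp (w : Fin n → ℝ) : Continuous (chirp w) := by
  unfold chirp; fun_prop

lemma tendsto_chirp_nhds_zero (y : EuclideanSpace ℝ (Fin n)) :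
    Tendsto (fun w => chirp w y) (𝓝 0) (𝓝 1) := by
  have h : Continuous fun w : Fin n → ℝ => chirp w y := by unfold chirp; fun_prop
  simpa [chirp_zero] using h.tendsto 0

lemma norm_chirp_sub_chirp_le (w : Fin n → ℝ) (y y' : EuclideanSpace ℝ (Fin n)) :
    ‖chirp w y - chirp w y'‖ ≤ |∑ k, w k * y k ^ 2 - ∑ k, w k * y' k ^ 2| := by
  have h : chirp w y - chirp w y' = chirp w y' *
      (Complex.exp (Complex.I * ((∑ k, w k * y k ^ 2 - ∑ k, w k * y' k ^ 2 : ℝ) : ℂ)) - 1) := by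
    rw [mul_sub, mul_one, chirp, chirp, ← Complex.exp_add]; push_cast; ring_nf
  rw [h, norm_mul, norm_chirp, one_mul, ← Real.norm_eq_abs]
  exact Real.norm_exp_I_mul_ofReal_sub_one_le

lemma abs_sum_mul_sq_sub_sum_mul_sq_le (w : Fin n → ℝ) (y y' : EuclideanSpace ℝ (Fin n)) :
    |∑ k, w k * y k ^ 2 - ∑ k, w k * y' k ^ 2| ≤ (∑ k, |w k|) * (‖y - y'‖ * (‖y‖ + ‖y'‖)) := by
  rw [← Finset.sum_sub_distrib, Finset.sum_mul]
  refine (Finset.abs_sum_le_sum_abs _ _).trans (Finset.sum_le_sum fun k _ => ?_)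
  have hsub : |y k - y' k| ≤ ‖y - y'‖ := PiLp.norm_apply_le (y - y') k
  have hadd : |y k + y' k| ≤ ‖y‖ + ‖y'‖ :=
    (abs_add_le _ _).trans (add_le_add (PiLp.norm_apply_le y k) (PiLp.norm_apply_le y' k))
  rw [← mul_sub, sq_sub_sq, abs_mul, abs_mul, mul_comm |y k + y' k|]
  gcongr

lemma norm_mul_chirp_sub_le {f : EuclideanSpace ℝ (Fin n) → ℂ} {C : NNReal}
    (hf : LipschitzWith C f) (w : Fin n → ℝ) (y y' : EuclideanSpace ℝ (Fin n)) :
    ‖f y * chirp w y - f y' * chirp w y'‖ ≤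
      (C + ‖f y'‖ * (∑ k, |w k|) * (‖y‖ + ‖y'‖)) * ‖y - y'‖ :=
  calc ‖f y * chirp w y - f y' * chirp w y'‖
      = ‖(f y - f y') * chirp w y + f y' * (chirp w y - chirp w y')‖ := by ring_nf
    _ ≤ ‖f y - f y'‖ + ‖f y'‖ * ‖chirp w y - chirp w y'‖ := by
      grw [norm_add_le, norm_mul, norm_mul, norm_chirp, mul_one]
    _ ≤ C * ‖y - y'‖ + ‖f y'‖ * ((∑ k, |w k|) * (‖y - y'‖ * (‖y‖ + ‖y'‖))) := by
      grw [hf.norm_sub_le, norm_chirp_sub_chirp_le, abs_sum_mul_sq_sub_sum_mul_sq_le]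
    _ = (C + ‖f y'‖ * (∑ k, |w k|) * (‖y‖ + ‖y'‖)) * ‖y - y'‖ := by ring

end Chirp

theorem tendsto_pvRiesz_mul_chirp {n : ℕ} (j : Fin n)
    (f : SchwartzMap (EuclideanSpace ℝ (Fin n)) ℂ) (x : EuclideanSpace ℝ (Fin n)) :
    Tendsto (fun w : Fin n → ℝ => pvRiesz j (fun y => f y * chirp w y) x) (𝓝 0)
      (𝓝 (pvRiesz j f x)) := by
  obtain ⟨C, hC⟩ := f.exists_lipschitzWith
  have hsmall : ∀ᶠ w : Fin n → ℝ in 𝓝 0, ∑ k, |w k| ≤ 1 := by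
    have h : Continuous fun w : Fin n → ℝ => ∑ k, |w k| := by fun_prop
    exact (h.tendsto 0).eventually (ge_mem_nhds (by simp))
  have hnorm : ∀ w y, ‖f y * chirp w y‖ = ‖f y‖ := fun w y => by
    rw [norm_mul, norm_chirp, mul_one]
  have hint : ∀ w, Integrable (fun y => f y * chirp w y) := fun w =>
    f.integrable.mono (f.continuous.mul (continuous_chirp w)).aestronglyMeasurable
      (Eventually.of_forall fun y => (hnorm w y).le)
  have hLip : ∀ w : Fin n → ℝ, ∑ k, |w k| ≤ 1 → ∀ z ∈ ball 0 1,
      ‖f (x - z) * chirp w (x - z) - f x * chirp w x‖ ≤ (C + ‖f x‖ * (2 * ‖x‖ + 1)) * ‖z‖ := by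
    intro w hw z hz
    have hz1 : ‖z‖ ≤ 1 := (mem_ball_zero_iff.1 hz).le
    refine (norm_mul_chirp_sub_le hC w (x - z) x).trans ?_
    rw [sub_sub_cancel_left, norm_neg]
    refine mul_le_mul_of_nonneg_right (add_le_add le_rfl ?_) (norm_nonneg z)
    calc ‖f x‖ * (∑ k, |w k|) * (‖x - z‖ + ‖x‖) ≤ ‖f x‖ * 1 * ((‖x‖ + ‖z‖) + ‖x‖) := by
          gcongr; exact norm_sub_le x z
      _ ≤ ‖f x‖ * (2 * ‖x‖ + 1) := by nlinarith [norm_nonneg (f x), hz1]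
  have hpv : ∀ w : Fin n → ℝ, ∑ k, |w k| ≤ 1 → pvRiesz j (fun y => f y * chirp w y) x =
      ∫ z, pvIntegrand j (fun y => f y * chirp w y) x z := fun w hw =>
    pvRiesz_eq_integral_pvIntegrand j (hint w) (hLip w hw)
  have hpv₀ : pvRiesz j f x = ∫ z, pvIntegrand j f x z := by
    simpa [chirp_zero] using hpv 0 (by simp)
  rw [hpv₀]
  refine Tendsto.congr' (hsmall.mono fun w hw => (hpv w hw).symm) ?_
  exact tendsto_integral_pvIntegrand j f.integrable.norm (Eventually.of_forall hint)
    (Eventually.of_forall fun w y => (hnorm w y).le) (hsmall.mono hLip)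
    (fun y => by simpa using (tendsto_chirp_nhds_zero y).const_mul (f y))

lemma tendsto_div_two_mul_lcParam (c : Fin 2 → ℝ) (hc : ∀ k, c k ≠ 0)
    {u : LCParam → Fin 2 → ℝ} (hu : Tendsto u (𝓝 lcParamLimit) (𝓝 0)) :
    Tendsto (fun q : LCParam => fun k => u q k / (2 * (q.1 k * c k))) (𝓝 lcParamLimit)
      (𝓝 0) := by
  refine tendsto_pi_nhds.2 fun k => ?_
  have hb : Tendsto (fun q : LCParam => 2 * (q.1 k * c k)) (𝓝 lcParamLimit)
      (𝓝 (2 * (-1 * c k))) :=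
    (((continuous_apply k).comp continuous_fst).tendsto lcParamLimit).mul_const _ |>.const_mul 2
  have h : Tendsto (fun q : LCParam => u q k / (2 * (q.1 k * c k))) (𝓝 lcParamLimit)
      (𝓝 (0 / (2 * (-1 * c k)))) := (tendsto_pi_nhds.1 hu k).div hb (by simp [hc k])
  rwa [zero_div] at h

/-- In `ℝ²`, fix `j ∈ {1,2}` and nonzero reals `c₁, c₂`, and for
parameters `(ρ₁, ρ₂, a₁, a₂, d₁, d₂)` with `ρₖ cₖ ≠ 0` let `Aₖ = [[aₖ, ρₖ cₖ],[cₖ, dₖ]]`.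
Then for every Schwartz `f` and every `x`, as `(ρ, a, d) → (-1, -1, 0, 0, 0, 0)`,
`R_j^A f(x)` converges to the classical Riesz transform `R_j f(x)`. -/
theorem lcRiesz_tendsto_riesz_pointwise (c : Fin 2 → ℝ) (hc : ∀ k, c k ≠ 0) (j : Fin 2)
    (f : SchwartzMap (EuclideanSpace ℝ (Fin 2)) ℂ) (x : EuclideanSpace ℝ (Fin 2)) :
    Tendsto (fun q : LCParam =>
        lcRiesz q.2.1 (fun k => q.1 k * c k) q.2.2 j (⇑f) x)
      (𝓝[lcParamValid c] lcParamLimit)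
      (𝓝 (rieszTrans j (⇑f) x)) := by
  have ha : Tendsto (fun q : LCParam => fun k => q.2.1 k / (2 * (q.1 k * c k)))
      (𝓝 lcParamLimit) (𝓝 0) :=
    tendsto_div_two_mul_lcParam c hc ((continuous_fst.comp continuous_snd).tendsto' _ _ rfl)
  have hd : Tendsto (fun q : LCParam => fun k => -q.2.2 k / (2 * (q.1 k * c k)))
      (𝓝 lcParamLimit) (𝓝 0) :=
    tendsto_div_two_mul_lcParam c hc (u := fun q k => -q.2.2 k)
      ((by fun_prop : Continuous fun q : LCParam => fun k => -q.2.2 k).tendsto' _ _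
        (funext fun _ => neg_zero))
  have h := (tendsto_const_nhds (x := (rieszConst 2 : ℂ))).mul
    ((tendsto_chirp_nhds_zero x).comp hd) |>.mul ((tendsto_pvRiesz_mul_chirp j f x).comp ha)
  simpa [lcRiesz, rieszTrans] using h.mono_left nhdsWithin_le_nhds
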